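/- arXiv:2407.07679 — 2 statements merged into one kernel-verified Lean document; each statement's English description precedes it below -/
import Mathlib

section
/- For ℓ ≥ 3 and a ∈ ℤ/ℓℤ, set ^LỸ^{(a)} := I + X^{(a)}D^{(a)} (a matrix over D_ℓ). Then the following identities hold in D_ℓ: (i) (^LỸ^{(a)})_1 X^{(a−1)}_2 = X^{(a−1)}_2 R_{21} (^LỸ^{(a)})_1 R_{21}^{−1}; (ii) (^LỸ^{(a)})_1 X^{(b)}_2 = X^{(b)}_2 (^LỸ^{(a)})_1 for all b ≠ a, a−1; (iii) D^{(a−1)}_2 (^LỸ^{(a)})_1 = R_{21} (^LỸ^{(a)})_1 R_{21}^{−1} D^{(a−1)}_2; (iv) (^LỸ^{(a)})_1 D^{(b)}_2 = D^{(b)}_2 (^LỸ^{(a)})_1 for all b ≠ a, a−1. (These are the unlocalized forms of the relations (YL3)–(YL6) for ^LY^{(a)} = (^LỸ^{(a)})^{−1}.) -/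
noncomputable section
open scoped BigOperators

namespace Rmatrix

/-- The base field `ℂ(q)`. -/
abbrev K : Type := RatFunc ℂ

/-- The parameter `q`. -/
def qq : K := RatFunc.X

/-- Row/column index type for `M_n ⊗ M_n`. -/
abbrev Idx (n : ℕ) := Fin n × Fin n

/-- The `R`-matrix
`R = q Σᵢ Eᵢᵢ⊗Eᵢᵢ + Σ_{i≠j} Eᵢᵢ⊗Eⱼⱼ + (q−q⁻¹) Σ_{i>j} Eⱼᵢ⊗Eᵢⱼ`. -/
def Rm (n : ℕ) : Matrix (Idx n) (Idx n) K := fun p r =>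
  (if p.1 = r.1 ∧ p.2 = r.2 ∧ p.1 = p.2 then qq else 0) +
  (if p.1 = r.1 ∧ p.2 = r.2 ∧ p.1 ≠ p.2 then 1 else 0) +
  (if p.1 = r.2 ∧ p.2 = r.1 ∧ p.1 < p.2 then qq - qq⁻¹ else 0)

/-- `R₂₁`, the `R`-matrix with the two tensor factors swapped. -/
def Rm21 (n : ℕ) : Matrix (Idx n) (Idx n) K := fun p r => Rm n (p.2, p.1) (r.2, r.1)

variable (n : ℕ) (A : Type) [Ring A] [Algebra K A]

/-- A scalar matrix viewed as a matrix with entries in the `K`-algebra `A`. -/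
def ext (M : Matrix (Idx n) (Idx n) K) : Matrix (Idx n) (Idx n) A :=
  M.map (algebraMap K A)

/-- `M₁ = Σ E_ij ⊗ I ⊗ m_ij`, the matrix `M` placed in the first tensor factor. -/
def m1 (M : Matrix (Fin n) (Fin n) A) : Matrix (Idx n) (Idx n) A :=
  fun p r => if p.2 = r.2 then M p.1 r.1 else 0

/-- `M₂ = Σ I ⊗ E_ij ⊗ m_ij`, the matrix `M` placed in the second tensor factor. -/
def m2 (M : Matrix (Fin n) (Fin n) A) : Matrix (Idx n) (Idx n) A :=
  fun p r => if p.1 = r.1 then M p.2 r.2 else 0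

/-- `Ω = Σ_{ij} E_ij ⊗ E_ji ⊗ 1`. -/
def Om : Matrix (Idx n) (Idx n) A := fun p r => if p.1 = r.2 ∧ p.2 = r.1 then 1 else 0

end Rmatrix

namespace Dell

open Rmatrix

variable (ℓ n : ℕ)

/-- Generators `x_ij^{(a)}`, `∂_ij^{(a)}` of `D_ℓ`, for `a ∈ ℤ/ℓℤ`. -/
inductive Gen (ℓ n : ℕ) : Type
  | x : ZMod ℓ → Fin n → Fin n → Gen ℓ n
  | d : ZMod ℓ → Fin n → Fin n → Gen ℓ n

abbrev F (ℓ n : ℕ) := FreeAlgebra K (Gen ℓ n)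

/-- The matrix `X^{(a)}` of generators, over the free algebra. -/
def XF (a : ZMod ℓ) : Matrix (Fin n) (Fin n) (F ℓ n) :=
  fun i j => FreeAlgebra.ι K (Gen.x a i j)

/-- The matrix `D^{(a)}` of generators, over the free algebra. -/
def DF (a : ZMod ℓ) : Matrix (Fin n) (Fin n) (F ℓ n) :=
  fun i j => FreeAlgebra.ι K (Gen.d a i j)

/-- `R` over the free algebra. -/
def Rf : Matrix (Idx n) (Idx n) (F ℓ n) := ext n (F ℓ n) (Rm n)
/-- `R₂₁` over the free algebra. -/
def R21f : Matrix (Idx n) (Idx n) (F ℓ n) := ext n (F ℓ n) (Rm21 n)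
/-- `R⁻¹` over the free algebra. -/
def Rif : Matrix (Idx n) (Idx n) (F ℓ n) := ext n (F ℓ n) (Rm n)⁻¹
/-- `R₂₁⁻¹` over the free algebra. -/
def R21if : Matrix (Idx n) (Idx n) (F ℓ n) := ext n (F ℓ n) (Rm21 n)⁻¹
/-- `Ω` over the free algebra. -/
def Omf : Matrix (Idx n) (Idx n) (F ℓ n) := Om n (F ℓ n)

/-- `M₁` over the free algebra. -/
def o1 (M : Matrix (Fin n) (Fin n) (F ℓ n)) : Matrix (Idx n) (Idx n) (F ℓ n) :=
  m1 n (F ℓ n) M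
/-- `M₂` over the free algebra. -/
def o2 (M : Matrix (Fin n) (Fin n) (F ℓ n)) : Matrix (Idx n) (Idx n) (F ℓ n) :=
  m2 n (F ℓ n) M

/-- The defining relations of the algebra `D_ℓ` of quantum differential operators on the
framed cyclic quiver with `ℓ ≥ 3` vertices. -/
inductive Rel (ℓ n : ℕ) : F ℓ n → F ℓ n → Prop
  | xaa (a : ZMod ℓ) (p r : Idx n) :
      Rel ℓ n ((R21f ℓ n * o1 ℓ n (XF ℓ n a) * o2 ℓ n (XF ℓ n a)) p r)
              ((o2 ℓ n (XF ℓ n a) * o1 ℓ n (XF ℓ n a) * Rf ℓ n) p r)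
  | daa (a : ZMod ℓ) (p r : Idx n) :
      Rel ℓ n ((R21f ℓ n * o1 ℓ n (DF ℓ n a) * o2 ℓ n (DF ℓ n a)) p r)
              ((o2 ℓ n (DF ℓ n a) * o1 ℓ n (DF ℓ n a) * Rf ℓ n) p r)
  | dxa (a : ZMod ℓ) (p r : Idx n) :
      Rel ℓ n ((o2 ℓ n (DF ℓ n a) * Rif ℓ n * o1 ℓ n (XF ℓ n a)) p r)
              ((o1 ℓ n (XF ℓ n a) * Rf ℓ n * o2 ℓ n (DF ℓ n a) + (qq - qq⁻¹) • Omf ℓ n) p r)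
  | xxadj (a : ZMod ℓ) (p r : Idx n) :
      Rel ℓ n ((o1 ℓ n (XF ℓ n a) * o2 ℓ n (XF ℓ n (a - 1))) p r)
              ((o2 ℓ n (XF ℓ n (a - 1)) * R21f ℓ n * o1 ℓ n (XF ℓ n a)) p r)
  | xxcom (a b : ZMod ℓ) (h : b ≠ a ∧ b ≠ a + 1 ∧ b ≠ a - 1) (p r : Idx n) :
      Rel ℓ n ((o1 ℓ n (XF ℓ n a) * o2 ℓ n (XF ℓ n b)) p r)
              ((o2 ℓ n (XF ℓ n b) * o1 ℓ n (XF ℓ n a)) p r)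
  | ddadj (a : ZMod ℓ) (p r : Idx n) :
      Rel ℓ n ((o1 ℓ n (DF ℓ n a) * o2 ℓ n (DF ℓ n (a + 1))) p r)
              ((o2 ℓ n (DF ℓ n (a + 1)) * Rif ℓ n * o1 ℓ n (DF ℓ n a)) p r)
  | ddcom (a b : ZMod ℓ) (h : b ≠ a ∧ b ≠ a + 1 ∧ b ≠ a - 1) (p r : Idx n) :
      Rel ℓ n ((o1 ℓ n (DF ℓ n a) * o2 ℓ n (DF ℓ n b)) p r)
              ((o2 ℓ n (DF ℓ n b) * o1 ℓ n (DF ℓ n a)) p r)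
  | dxadj1 (a : ZMod ℓ) (p r : Idx n) :
      Rel ℓ n ((o1 ℓ n (DF ℓ n a) * o2 ℓ n (XF ℓ n (a + 1))) p r)
              ((Rf ℓ n * o2 ℓ n (XF ℓ n (a + 1)) * o1 ℓ n (DF ℓ n a)) p r)
  | dxadj2 (a : ZMod ℓ) (p r : Idx n) :
      Rel ℓ n ((o1 ℓ n (DF ℓ n a) * o2 ℓ n (XF ℓ n (a - 1))) p r)
              ((o2 ℓ n (XF ℓ n (a - 1)) * o1 ℓ n (DF ℓ n a) * R21if ℓ n) p r)
  | dxcom (a b : ZMod ℓ) (h : b ≠ a ∧ b ≠ a + 1 ∧ b ≠ a - 1) (p r : Idx n) :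
      Rel ℓ n ((o1 ℓ n (DF ℓ n a) * o2 ℓ n (XF ℓ n b)) p r)
              ((o2 ℓ n (XF ℓ n b) * o1 ℓ n (DF ℓ n a)) p r)

/-- The algebra `D_ℓ` of quantum differential operators on the framed cyclic quiver. -/
abbrev Dl (ℓ n : ℕ) := RingQuot (Rel ℓ n)

/-- The matrix `X^{(a)}` over `D_ℓ`. -/
def XM (a : ZMod ℓ) : Matrix (Fin n) (Fin n) (Dl ℓ n) :=
  fun i j => RingQuot.mkAlgHom K (Rel ℓ n) (XF ℓ n a i j)

/-- The matrix `D^{(a)}` over `D_ℓ`. -/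
def DM (a : ZMod ℓ) : Matrix (Fin n) (Fin n) (Dl ℓ n) :=
  fun i j => RingQuot.mkAlgHom K (Rel ℓ n) (DF ℓ n a i j)

/-- `R` over `D_ℓ`. -/
def Ra : Matrix (Idx n) (Idx n) (Dl ℓ n) := ext n (Dl ℓ n) (Rm n)
/-- `R₂₁` over `D_ℓ`. -/
def R21a : Matrix (Idx n) (Idx n) (Dl ℓ n) := ext n (Dl ℓ n) (Rm21 n)
/-- `R⁻¹` over `D_ℓ`. -/
def Ria : Matrix (Idx n) (Idx n) (Dl ℓ n) := ext n (Dl ℓ n) (Rm n)⁻¹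
/-- `R₂₁⁻¹` over `D_ℓ`. -/
def R21ia : Matrix (Idx n) (Idx n) (Dl ℓ n) := ext n (Dl ℓ n) (Rm21 n)⁻¹

/-- `M₁` over `D_ℓ`. -/
def q1 (M : Matrix (Fin n) (Fin n) (Dl ℓ n)) : Matrix (Idx n) (Idx n) (Dl ℓ n) :=
  m1 n (Dl ℓ n) M
/-- `M₂` over `D_ℓ`. -/
def q2 (M : Matrix (Fin n) (Fin n) (Dl ℓ n)) : Matrix (Idx n) (Idx n) (Dl ℓ n) :=
  m2 n (Dl ℓ n) M

/-- `X^∘ := X^{(1)} X^{(2)} ⋯ X^{(ℓ)}`. -/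
def Xcirc : Matrix (Fin n) (Fin n) (Dl ℓ n) :=
  ((List.range ℓ).map fun k => XM ℓ n ((k : ZMod ℓ) + 1)).prod

/-- `^LỸ^{(a)} := I + X^{(a)} D^{(a)}`. -/
def LY (a : ZMod ℓ) : Matrix (Fin n) (Fin n) (Dl ℓ n) := 1 + XM ℓ n a * DM ℓ n a

/-- `^RY^{(a)} := I + D^{(a)} X^{(a)}`. -/
def RYa (a : ZMod ℓ) : Matrix (Fin n) (Fin n) (Dl ℓ n) := 1 + DM ℓ n a * XM ℓ n a

end Dell


/-! Each identity says that `L := (^LỸ^{(a)})₁ = 1 + X₁D₁` commutes with a suitable `W`, namely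
`X₂^{(a−1)}R₂₁`, `X₂^{(b)}`, `R₂₁⁻¹D₂^{(a−1)}` or `D₂^{(b)}` (for (i) and (iii) after moving
`R₂₁^{±1}` across, which needs `R` to be invertible). Now `1 + XD` commutes with `W` as soon as
`D W = Y D` and `X Y = W X` for some `Y`, and the defining relations of `D_ℓ`, some of them read
with the two tensor factors exchanged, supply exactly such pairs. `R` is invertible because it is
a diagonal matrix plus a square-zero off-diagonal part. -/

namespace Statement9

open Rmatrix Dell Matrix

section RMatrix

variable (n : ℕ)

def rDiag : Idx n → K := fun p => if p.1 = p.2 then qq else 1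

def rOffDiag : Matrix (Idx n) (Idx n) K := fun p r =>
  if p.1 = r.2 ∧ p.2 = r.1 ∧ p.1 < p.2 then qq - qq⁻¹ else 0

lemma Rm_eq_diagonal_add : Rm n = diagonal (rDiag n) + rOffDiag n := by
  ext p r
  simp only [Rm, rDiag, rOffDiag, Matrix.add_apply, diagonal_apply, Prod.ext_iff]
  split_ifs <;> grind

lemma diagonal_rDiag_mul_rOffDiag : diagonal (rDiag n) * rOffDiag n = rOffDiag n := by
  ext p r
  simp only [diagonal_mul, rDiag, rOffDiag]
  split_ifs <;> grind

lemma rOffDiag_mul_diagonal_inv :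
    rOffDiag n * diagonal (fun p => (rDiag n p)⁻¹) = rOffDiag n := by
  ext p r
  simp only [mul_diagonal, rDiag, rOffDiag]
  split_ifs <;> grind

lemma rOffDiag_mul_self : rOffDiag n * rOffDiag n = 0 := by
  ext p r
  simp only [mul_apply, rOffDiag, Matrix.zero_apply]
  refine Finset.sum_eq_zero fun s _ => ?_
  split_ifs <;> grind

lemma Rm_mul_eq_one :
    Rm n * (diagonal (fun p => (rDiag n p)⁻¹) - rOffDiag n) = 1 := by
  have hd : diagonal (rDiag n) * diagonal (fun p => (rDiag n p)⁻¹) = 1 := by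
    rw [diagonal_mul_diagonal, ← diagonal_one]
    congr 1
    ext p
    exact mul_inv_cancel₀ (by unfold rDiag; split_ifs <;> simp [qq, RatFunc.X_ne_zero])
  rw [Rm_eq_diagonal_add, add_mul, mul_sub, mul_sub, hd, diagonal_rDiag_mul_rOffDiag,
    rOffDiag_mul_diagonal_inv, rOffDiag_mul_self]
  abel

lemma isUnit_det_Rm : IsUnit (Rm n).det := isUnit_det_of_right_inverse (Rm_mul_eq_one n)

lemma Rm21_eq_submatrix :
    Rm21 n = (Rm n).submatrix (Equiv.prodComm _ _) (Equiv.prodComm _ _) := rfl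

lemma isUnit_det_Rm21 : IsUnit (Rm21 n).det := by
  rw [Rm21_eq_submatrix, det_submatrix_equiv_self]
  exact isUnit_det_Rm n

lemma inv_Rm21_eq_submatrix :
    (Rm21 n)⁻¹ = (Rm n)⁻¹.submatrix (Equiv.prodComm _ _) (Equiv.prodComm _ _) := by
  rw [Rm21_eq_submatrix, inv_submatrix_equiv]

end RMatrix

section Tensor

variable (n : ℕ) (A : Type) [Ring A]

def m1RingHom : Matrix (Fin n) (Fin n) A →+* Matrix (Idx n) (Idx n) A :=
  (blockDiagonalRingHom (Fin n) (Fin n) A).comp (Pi.constRingHom (Fin n) _)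

lemma m1RingHom_apply (M : Matrix (Fin n) (Fin n) A) : m1RingHom n A M = m1 n A M := rfl

lemma m1_one_add_mul (X D : Matrix (Fin n) (Fin n) A) :
    m1 n A (1 + X * D) = 1 + m1 n A X * m1 n A D := by
  simp only [← m1RingHom_apply, map_add, map_one, map_mul]

lemma map_m1 {B : Type} [Ring B] (f : A → B) (hf : f 0 = 0) (M : Matrix (Fin n) (Fin n) A) :
    (m1 n A M).map f = m1 n B (M.map f) := by
  ext p r
  simp only [m1, map_apply]
  split_ifs <;> simp [hf]

lemma map_m2 {B : Type} [Ring B] (f : A → B) (hf : f 0 = 0) (M : Matrix (Fin n) (Fin n) A) :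
    (m2 n A M).map f = m2 n B (M.map f) := by
  ext p r
  simp only [m2, map_apply]
  split_ifs <;> simp [hf]

def swapFactors : Matrix (Idx n) (Idx n) A ≃+* Matrix (Idx n) (Idx n) A :=
  reindexRingEquiv A (Equiv.prodComm (Fin n) (Fin n))

lemma swapFactors_m1 (M : Matrix (Fin n) (Fin n) A) : swapFactors n A (m1 n A M) = m2 n A M :=
  rfl

lemma swapFactors_m2 (M : Matrix (Fin n) (Fin n) A) : swapFactors n A (m2 n A M) = m1 n A M :=
  rfl

variable {A} [Algebra K A]

lemma ext_mul_ext_inv {M : Matrix (Idx n) (Idx n) K} (hM : IsUnit M.det) :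
    ext n A M * ext n A M⁻¹ = 1 := by
  rw [Rmatrix.ext, Rmatrix.ext, ← Matrix.map_mul, mul_nonsing_inv M hM,
    Matrix.map_one _ (map_zero _) (map_one _)]

lemma ext_inv_mul_ext {M : Matrix (Idx n) (Idx n) K} (hM : IsUnit M.det) :
    ext n A M⁻¹ * ext n A M = 1 := by
  rw [Rmatrix.ext, Rmatrix.ext, ← Matrix.map_mul, nonsing_inv_mul M hM,
    Matrix.map_one _ (map_zero _) (map_one _)]

lemma swapFactors_ext_Rm : swapFactors n A (ext n A (Rm n)) = ext n A (Rm21 n) := rfl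

lemma swapFactors_ext_Rm21 : swapFactors n A (ext n A (Rm21 n)) = ext n A (Rm n) := rfl

lemma swapFactors_ext_inv_Rm : swapFactors n A (ext n A (Rm n)⁻¹) = ext n A (Rm21 n)⁻¹ := by
  rw [inv_Rm21_eq_submatrix]; rfl

lemma swapFactors_ext_inv_Rm21 : swapFactors n A (ext n A (Rm21 n)⁻¹) = ext n A (Rm n)⁻¹ := by
  rw [inv_Rm21_eq_submatrix]; rfl

variable {B : Type} [Ring B] [Algebra K B]

lemma map_ext_of_algHom (f : A →ₐ[K] B) (M : Matrix (Idx n) (Idx n) K) :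
    (ext n A M).map f = ext n B M := by
  ext p r
  simp [Rmatrix.ext]

end Tensor

section Relations

variable {ℓ n : ℕ}

local notation "π" => RingQuot.mkAlgHom K (Rel _ _)

lemma map_mkAlgHom_eq_of_rel {M N : Matrix (Idx n) (Idx n) (F ℓ n)}
    (h : ∀ p r, Rel ℓ n (M p r) (N p r)) : M.map π = N.map π := by
  ext p r
  exact RingQuot.mkAlgHom_rel K (h p r)

@[simp]
lemma map_mkAlgHom_XF (a : ZMod ℓ) : (XF ℓ n a).map π = XM ℓ n a := rfl

@[simp]
lemma map_mkAlgHom_DF (a : ZMod ℓ) : (DF ℓ n a).map π = DM ℓ n a := rfl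

@[simp]
lemma map_mkAlgHom_o1 (M : Matrix (Fin n) (Fin n) (F ℓ n)) : (o1 ℓ n M).map π = q1 ℓ n (M.map π) :=
  map_m1 n _ _ (map_zero _) M

@[simp]
lemma map_mkAlgHom_o2 (M : Matrix (Fin n) (Fin n) (F ℓ n)) : (o2 ℓ n M).map π = q2 ℓ n (M.map π) :=
  map_m2 n _ _ (map_zero _) M

@[simp]
lemma map_mkAlgHom_Rf : (Rf ℓ n).map π = Ra ℓ n := map_ext_of_algHom n _ _

@[simp]
lemma map_mkAlgHom_R21f : (R21f ℓ n).map π = R21a ℓ n := map_ext_of_algHom n _ _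

@[simp]
lemma map_mkAlgHom_Rif : (Rif ℓ n).map π = Ria ℓ n := map_ext_of_algHom n _ _

@[simp]
lemma map_mkAlgHom_R21if : (R21if ℓ n).map π = R21ia ℓ n := map_ext_of_algHom n _ _

lemma rel_xxadj (a : ZMod ℓ) :
    q1 ℓ n (XM ℓ n a) * q2 ℓ n (XM ℓ n (a - 1))
      = q2 ℓ n (XM ℓ n (a - 1)) * R21a ℓ n * q1 ℓ n (XM ℓ n a) := by
  simpa using map_mkAlgHom_eq_of_rel (Rel.xxadj a)

lemma rel_xxcom {a b : ZMod ℓ} (h : b ≠ a ∧ b ≠ a + 1 ∧ b ≠ a - 1) :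
    q1 ℓ n (XM ℓ n a) * q2 ℓ n (XM ℓ n b) = q2 ℓ n (XM ℓ n b) * q1 ℓ n (XM ℓ n a) := by
  simpa using map_mkAlgHom_eq_of_rel (Rel.xxcom a b h)

lemma rel_ddadj (a : ZMod ℓ) :
    q1 ℓ n (DM ℓ n a) * q2 ℓ n (DM ℓ n (a + 1))
      = q2 ℓ n (DM ℓ n (a + 1)) * Ria ℓ n * q1 ℓ n (DM ℓ n a) := by
  simpa using map_mkAlgHom_eq_of_rel (Rel.ddadj a)

lemma rel_ddcom {a b : ZMod ℓ} (h : b ≠ a ∧ b ≠ a + 1 ∧ b ≠ a - 1) :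
    q1 ℓ n (DM ℓ n a) * q2 ℓ n (DM ℓ n b) = q2 ℓ n (DM ℓ n b) * q1 ℓ n (DM ℓ n a) := by
  simpa using map_mkAlgHom_eq_of_rel (Rel.ddcom a b h)

lemma rel_dxadj1 (a : ZMod ℓ) :
    q1 ℓ n (DM ℓ n a) * q2 ℓ n (XM ℓ n (a + 1))
      = Ra ℓ n * q2 ℓ n (XM ℓ n (a + 1)) * q1 ℓ n (DM ℓ n a) := by
  simpa using map_mkAlgHom_eq_of_rel (Rel.dxadj1 a)

lemma rel_dxadj2 (a : ZMod ℓ) :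
    q1 ℓ n (DM ℓ n a) * q2 ℓ n (XM ℓ n (a - 1))
      = q2 ℓ n (XM ℓ n (a - 1)) * q1 ℓ n (DM ℓ n a) * R21ia ℓ n := by
  simpa using map_mkAlgHom_eq_of_rel (Rel.dxadj2 a)

lemma rel_dxcom {a b : ZMod ℓ} (h : b ≠ a ∧ b ≠ a + 1 ∧ b ≠ a - 1) :
    q1 ℓ n (DM ℓ n a) * q2 ℓ n (XM ℓ n b) = q2 ℓ n (XM ℓ n b) * q1 ℓ n (DM ℓ n a) := by
  simpa using map_mkAlgHom_eq_of_rel (Rel.dxcom a b h)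

lemma rel_xxadj_swap (a : ZMod ℓ) :
    q2 ℓ n (XM ℓ n (a + 1)) * q1 ℓ n (XM ℓ n a)
      = q1 ℓ n (XM ℓ n a) * Ra ℓ n * q2 ℓ n (XM ℓ n (a + 1)) := by
  have h := congrArg (swapFactors n (Dl ℓ n)) (rel_xxadj (n := n) (a + 1))
  rw [add_sub_cancel_right] at h
  simpa only [q1, q2, Ra, R21a, map_mul, swapFactors_m1, swapFactors_m2,
    swapFactors_ext_Rm21] using h

lemma rel_ddadj_swap (a : ZMod ℓ) :
    q2 ℓ n (DM ℓ n (a - 1)) * q1 ℓ n (DM ℓ n a)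
      = q1 ℓ n (DM ℓ n a) * R21ia ℓ n * q2 ℓ n (DM ℓ n (a - 1)) := by
  have h := congrArg (swapFactors n (Dl ℓ n)) (rel_ddadj (n := n) (a - 1))
  rw [sub_add_cancel] at h
  simpa only [q1, q2, Ria, R21ia, map_mul, swapFactors_m1, swapFactors_m2,
    swapFactors_ext_inv_Rm] using h

lemma rel_dxadj1_swap (a : ZMod ℓ) :
    q2 ℓ n (DM ℓ n (a - 1)) * q1 ℓ n (XM ℓ n a)
      = R21a ℓ n * q1 ℓ n (XM ℓ n a) * q2 ℓ n (DM ℓ n (a - 1)) := by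
  have h := congrArg (swapFactors n (Dl ℓ n)) (rel_dxadj1 (n := n) (a - 1))
  rw [sub_add_cancel] at h
  simpa only [q1, q2, Ra, R21a, map_mul, swapFactors_m1, swapFactors_m2,
    swapFactors_ext_Rm] using h

lemma rel_dxadj2_swap (a : ZMod ℓ) :
    q2 ℓ n (DM ℓ n (a + 1)) * q1 ℓ n (XM ℓ n a)
      = q1 ℓ n (XM ℓ n a) * q2 ℓ n (DM ℓ n (a + 1)) * Ria ℓ n := by
  have h := congrArg (swapFactors n (Dl ℓ n)) (rel_dxadj2 (n := n) (a + 1))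
  rw [add_sub_cancel_right] at h
  simpa only [q1, q2, Ria, R21ia, map_mul, swapFactors_m1, swapFactors_m2,
    swapFactors_ext_inv_Rm21] using h

lemma rel_dxcom_swap {a b : ZMod ℓ} (h : a ≠ b ∧ a ≠ b + 1 ∧ a ≠ b - 1) :
    q2 ℓ n (DM ℓ n b) * q1 ℓ n (XM ℓ n a) = q1 ℓ n (XM ℓ n a) * q2 ℓ n (DM ℓ n b) := by
  simpa only [q1, q2, map_mul, swapFactors_m1, swapFactors_m2] using
    congrArg (swapFactors n (Dl ℓ n)) (rel_dxcom (n := n) h)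

end Relations

section Semiconj

variable {S : Type*} [Ring S]

lemma commute_one_add_mul_of_semiconjBy {X D W Y : S} (hD : SemiconjBy D W Y)
    (hX : SemiconjBy X Y W) : Commute (1 + X * D) W :=
  (Commute.one_left W).add_left (hX.mul_left hD)

lemma mul_eq_of_commute_mul_right {L Z R R' : S} (h : Commute L (Z * R)) (hR : R * R' = 1) :
    L * Z = Z * R * L * R' := by
  rw [← h.eq, mul_assoc L, mul_assoc, hR, mul_one]

lemma mul_eq_of_commute_mul_left {L Z R R' : S} (h : Commute L (R' * Z)) (hR : R * R' = 1) :
    Z * L = R * L * R' * Z := by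
  rw [mul_assoc _ R', mul_assoc R, h.eq, ← mul_assoc, ← mul_assoc, hR, one_mul]

end Semiconj

section LY

variable {ℓ n : ℕ}

lemma R21a_mul_R21ia : R21a ℓ n * R21ia ℓ n = 1 := ext_mul_ext_inv n (isUnit_det_Rm21 n)

lemma R21ia_mul_R21a : R21ia ℓ n * R21a ℓ n = 1 := ext_inv_mul_ext n (isUnit_det_Rm21 n)

lemma q1_LY (a : ZMod ℓ) : q1 ℓ n (LY ℓ n a) = 1 + q1 ℓ n (XM ℓ n a) * q1 ℓ n (DM ℓ n a) :=
  m1_one_add_mul n _ _ _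

lemma commute_LY_XM_sub_one_mul_R21a (a : ZMod ℓ) :
    Commute (q1 ℓ n (LY ℓ n a)) (q2 ℓ n (XM ℓ n (a - 1)) * R21a ℓ n) := by
  rw [q1_LY]
  refine commute_one_add_mul_of_semiconjBy ?_ (rel_xxadj a)
  show _ * (_ * _) = _ * _
  rw [← mul_assoc, rel_dxadj2, mul_assoc, R21ia_mul_R21a, mul_one]

lemma commute_LY_XM (a : ZMod ℓ) {b : ZMod ℓ} (hb : b ≠ a) (hb' : b ≠ a - 1) :
    Commute (q1 ℓ n (LY ℓ n a)) (q2 ℓ n (XM ℓ n b)) := by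
  rw [q1_LY]
  by_cases hb'' : b = a + 1
  · subst hb''
    refine commute_one_add_mul_of_semiconjBy (rel_dxadj1 a) ?_
    exact (mul_assoc _ _ _).symm.trans (rel_xxadj_swap a).symm
  · exact commute_one_add_mul_of_semiconjBy (rel_dxcom ⟨hb, hb'', hb'⟩)
      (rel_xxcom ⟨hb, hb'', hb'⟩)

lemma commute_LY_R21ia_mul_DM_sub_one (a : ZMod ℓ) :
    Commute (q1 ℓ n (LY ℓ n a)) (R21ia ℓ n * q2 ℓ n (DM ℓ n (a - 1))) := by
  rw [q1_LY]
  refine commute_one_add_mul_of_semiconjBy (Y := q2 ℓ n (DM ℓ n (a - 1))) ?_ ?_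
  · show _ * (_ * _) = _ * _
    rw [← mul_assoc, rel_ddadj_swap]
  · show _ * _ = _ * _ * _
    rw [mul_assoc, rel_dxadj1_swap, ← mul_assoc, ← mul_assoc, R21ia_mul_R21a, one_mul]

lemma commute_LY_DM (a : ZMod ℓ) {b : ZMod ℓ} (hb : b ≠ a) (hb' : b ≠ a - 1) :
    Commute (q1 ℓ n (LY ℓ n a)) (q2 ℓ n (DM ℓ n b)) := by
  rw [q1_LY]
  by_cases hb'' : b = a + 1
  · subst hb''
    refine commute_one_add_mul_of_semiconjBy (rel_ddadj a) ?_
    exact (mul_assoc _ _ _).symm.trans (rel_dxadj2_swap a).symm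
  · have hab : a ≠ b ∧ a ≠ b + 1 ∧ a ≠ b - 1 :=
      ⟨hb.symm, fun h => hb' (by rw [h]; ring), fun h => hb'' (by rw [h]; ring)⟩
    exact commute_one_add_mul_of_semiconjBy (rel_ddcom ⟨hb, hb'', hb'⟩)
      (rel_dxcom_swap hab).symm

end LY

theorem statement_9_general (ℓ n : ℕ) (a : ZMod ℓ) :
    (q1 ℓ n (LY ℓ n a) * q2 ℓ n (XM ℓ n (a - 1))
      = q2 ℓ n (XM ℓ n (a - 1)) * R21a ℓ n * q1 ℓ n (LY ℓ n a) * R21ia ℓ n) ∧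
    (∀ b : ZMod ℓ, b ≠ a → b ≠ a - 1 →
      q1 ℓ n (LY ℓ n a) * q2 ℓ n (XM ℓ n b) = q2 ℓ n (XM ℓ n b) * q1 ℓ n (LY ℓ n a)) ∧
    (q2 ℓ n (DM ℓ n (a - 1)) * q1 ℓ n (LY ℓ n a)
      = R21a ℓ n * q1 ℓ n (LY ℓ n a) * R21ia ℓ n * q2 ℓ n (DM ℓ n (a - 1))) ∧
    (∀ b : ZMod ℓ, b ≠ a → b ≠ a - 1 →
      q1 ℓ n (LY ℓ n a) * q2 ℓ n (DM ℓ n b) = q2 ℓ n (DM ℓ n b) * q1 ℓ n (LY ℓ n a)) :=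
  ⟨mul_eq_of_commute_mul_right (commute_LY_XM_sub_one_mul_R21a a) R21a_mul_R21ia,
    fun _ hb hb' => (commute_LY_XM a hb hb').eq,
    mul_eq_of_commute_mul_left (commute_LY_R21ia_mul_DM_sub_one a) R21a_mul_R21ia,
    fun _ hb hb' => (commute_LY_DM a hb hb').eq⟩

/--
For `ℓ ≥ 3`, `a ∈ ℤ/ℓℤ` and `^LỸ^{(a)} = I + X^{(a)}D^{(a)}` in `D_ℓ`:
(i) `(^LỸ^{(a)})₁ X^{(a−1)}₂ = X^{(a−1)}₂ R₂₁ (^LỸ^{(a)})₁ R₂₁⁻¹`;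
(ii) `(^LỸ^{(a)})₁ X^{(b)}₂ = X^{(b)}₂ (^LỸ^{(a)})₁` for all `b ≠ a, a−1`;
(iii) `D^{(a−1)}₂ (^LỸ^{(a)})₁ = R₂₁ (^LỸ^{(a)})₁ R₂₁⁻¹ D^{(a−1)}₂`;
(iv) `(^LỸ^{(a)})₁ D^{(b)}₂ = D^{(b)}₂ (^LỸ^{(a)})₁` for all `b ≠ a, a−1`.
-/
theorem statement_9 (ℓ n : ℕ) (hl : 3 ≤ ℓ) (hn : 1 ≤ n) (a : ZMod ℓ) :
    (q1 ℓ n (LY ℓ n a) * q2 ℓ n (XM ℓ n (a - 1))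
      = q2 ℓ n (XM ℓ n (a - 1)) * R21a ℓ n * q1 ℓ n (LY ℓ n a) * R21ia ℓ n) ∧
    (∀ b : ZMod ℓ, b ≠ a → b ≠ a - 1 →
      q1 ℓ n (LY ℓ n a) * q2 ℓ n (XM ℓ n b) = q2 ℓ n (XM ℓ n b) * q1 ℓ n (LY ℓ n a)) ∧
    (q2 ℓ n (DM ℓ n (a - 1)) * q1 ℓ n (LY ℓ n a)
      = R21a ℓ n * q1 ℓ n (LY ℓ n a) * R21ia ℓ n * q2 ℓ n (DM ℓ n (a - 1))) ∧
    (∀ b : ZMod ℓ, b ≠ a → b ≠ a - 1 →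
      q1 ℓ n (LY ℓ n a) * q2 ℓ n (DM ℓ n b) = q2 ℓ n (DM ℓ n b) * q1 ℓ n (LY ℓ n a)) :=
  statement_9_general ℓ n a

end Statement9
end
end

section
/- For ℓ ≥ 3 and a ∈ ℤ/ℓℤ, set ^RY^{(a)} := I + D^{(a)}X^{(a)} (a matrix over D_ℓ). Then the following identities hold in D_ℓ: (i) R^{−1} (^RY^{(a)})_1 R X^{(a+1)}_2 = X^{(a+1)}_2 (^RY^{(a)})_1; (ii) (^RY^{(a)})_1 X^{(b)}_2 = X^{(b)}_2 (^RY^{(a)})_1 for all b ≠ a, a+1; (iii) (^RY^{(a)})_1 D^{(a+1)}_2 = D^{(a+1)}_2 R^{−1} (^RY^{(a)})_1 R; (iv) (^RY^{(a)})_1 D^{(b)}_2 = D^{(b)}_2 (^RY^{(a)})_1 for all b ≠ a, a+1. -/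
noncomputable section
open scoped BigOperators

/-!
With `^RY^{(a)} = 1 + D^{(a)} X^{(a)}`, each identity comes from pushing `X^{(b)}₂` or `D^{(b)}₂`
first past `X^{(a)}₁` and then past `D^{(a)}₁` with the exchange relations of `D_ℓ`, read either
as stated or after swapping the two tensor factors (which turns `M₁, M₂, R` into `M₂, M₁, R₂₁`).
The `R`-matrices produced on the way cancel in pairs. This needs `R` to be invertible:
`R = Δ + N` (`Rdiag`, `Rnil`) with `Δ` an invertible diagonal matrix, `N² = 0` and
`ΔN = NΔ⁻¹ = N`, so `R (Δ⁻¹ - N) = 1`.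
-/

section TwistedCommutation

variable {M : Type*} [Ring M] {R R' S T D X Y : M}

lemma conj_one_add_mul_mul_eq_mul (hR : R' * R = 1) (hYX : Y * X = X * R * Y)
    (hDY : D * Y = R * Y * D) : R' * (1 + D * X) * R * Y = Y * (1 + D * X) :=
  calc R' * (1 + D * X) * R * Y = R' * R * Y + R' * D * (X * R * Y) := by noncomm_ring
    _ = R' * R * Y + R' * (D * Y) * X := by rw [← hYX]; noncomm_ring
    _ = R' * R * Y * (1 + D * X) := by rw [hDY]; noncomm_ring
    _ = Y * (1 + D * X) := by rw [hR, one_mul]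

lemma one_add_mul_mul_eq_mul_conj (hR : R' * R = 1) (hYX : Y * X = X * Y * R')
    (hDY : D * Y = Y * R' * D) : (1 + D * X) * Y = Y * R' * (1 + D * X) * R := by
  have hXY : X * Y = Y * X * R := by rw [hYX, mul_assoc, hR, mul_one]
  calc (1 + D * X) * Y = Y + D * (X * Y) := by noncomm_ring
    _ = Y * (R' * R) + D * Y * X * R := by rw [hXY, hR]; noncomm_ring
    _ = Y * R' * (1 + D * X) * R := by rw [hDY]; noncomm_ring

lemma commute_one_add_mul_of_right_twist (hXY : X * Y = Y * S * X) (hDY : D * Y = Y * D * T)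
    (hTS : T * S = 1) : Commute (1 + D * X) Y :=
  calc (1 + D * X) * Y = Y + D * Y * S * X := by rw [add_mul, mul_assoc D, hXY]; noncomm_ring
    _ = Y + Y * D * (T * S) * X := by rw [hDY]; noncomm_ring
    _ = Y * (1 + D * X) := by rw [hTS]; noncomm_ring

lemma commute_one_add_mul_of_left_twist (hYX : Y * X = S * X * Y) (hYD : Y * D = D * T * Y)
    (hTS : T * S = 1) : Commute (1 + D * X) Y :=
  Eq.symm <| calc
    Y * (1 + D * X) = Y + D * T * (Y * X) := by rw [mul_add, ← mul_assoc, hYD]; noncomm_ring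
    _ = Y + D * (T * S) * X * Y := by rw [hYX]; noncomm_ring
    _ = (1 + D * X) * Y := by rw [hTS]; noncomm_ring

lemma Commute.one_add_mul (hD : Commute D Y) (hX : Commute X Y) : Commute (1 + D * X) Y :=
  (Commute.one_left Y).add_left (hD.mul_left hX)

end TwistedCommutation

namespace Rmatrix

open Matrix

def Rnil (n : ℕ) : Matrix (Idx n) (Idx n) K := fun p r =>
  if p.1 = r.2 ∧ p.2 = r.1 ∧ p.1 < p.2 then qq - qq⁻¹ else 0

def Rdiag (n : ℕ) (c : K) : Idx n → K := fun p => if p.1 = p.2 then c else 1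

lemma qq_ne_zero : qq ≠ 0 := RatFunc.X_ne_zero

lemma Rm_eq_diagonal_add_Rnil (n : ℕ) : Rm n = diagonal (Rdiag n qq) + Rnil n := by
  ext ⟨i, j⟩ ⟨k, l⟩
  simp only [Rm, Rdiag, Rnil, Matrix.add_apply, diagonal_apply, Prod.ext_iff]
  by_cases hik : i = k <;> by_cases hjl : j = l <;> by_cases hij : i = j <;> simp_all

lemma Rnil_mul_Rnil (n : ℕ) : Rnil n * Rnil n = 0 := by
  ext ⟨i, j⟩ r
  refine Finset.sum_eq_zero fun s _ => ?_
  by_cases h : i = s.2 ∧ j = s.1 ∧ i < j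
  · obtain ⟨rfl, rfl, hij⟩ := h
    simp [Rnil, hij.not_gt]
  · simp [Rnil, h]

lemma diagonal_Rdiag_mul_Rnil (n : ℕ) (c : K) : diagonal (Rdiag n c) * Rnil n = Rnil n := by
  ext ⟨i, j⟩ ⟨k, l⟩
  by_cases h : i = l ∧ j = k ∧ i < j
  · obtain ⟨rfl, rfl, hij⟩ := h
    simp [Rdiag, Rnil, hij, hij.ne]
  · simp [Rnil, h]

lemma Rnil_mul_diagonal_Rdiag (n : ℕ) (c : K) : Rnil n * diagonal (Rdiag n c) = Rnil n := by
  ext ⟨i, j⟩ ⟨k, l⟩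
  by_cases h : i = l ∧ j = k ∧ i < j
  · obtain ⟨rfl, rfl, hij⟩ := h
    simp [Rdiag, Rnil, hij, hij.ne']
  · simp [Rnil, h]

lemma diagonal_Rdiag_mul_inv (n : ℕ) : diagonal (Rdiag n qq) * diagonal (Rdiag n qq⁻¹) = 1 := by
  rw [diagonal_mul_diagonal, ← diagonal_one]
  congr 1
  ext p
  by_cases h : p.1 = p.2 <;> simp [Rdiag, h, qq_ne_zero]

lemma Rm_mul_diagonal_sub_Rnil (n : ℕ) : Rm n * (diagonal (Rdiag n qq⁻¹) - Rnil n) = 1 := by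
  rw [Rm_eq_diagonal_add_Rnil, add_mul, mul_sub, mul_sub, diagonal_Rdiag_mul_inv,
    diagonal_Rdiag_mul_Rnil, Rnil_mul_diagonal_Rdiag, Rnil_mul_Rnil]
  abel

lemma isUnit_det_Rm (n : ℕ) : IsUnit (Rm n).det :=
  isUnit_det_of_right_inverse (Rm_mul_diagonal_sub_Rnil n)

lemma Rm21_eq_submatrix (n : ℕ) :
    Rm21 n = (Rm n).submatrix (Equiv.prodComm _ _) (Equiv.prodComm _ _) := rfl

lemma isUnit_det_Rm21 (n : ℕ) : IsUnit (Rm21 n).det := by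
  rw [Rm21_eq_submatrix, det_submatrix_equiv_self]
  exact isUnit_det_Rm n

variable (n : ℕ) {A B : Type} [Ring A] [Ring B]

lemma ext_inv_mul_ext [Algebra K A] {M : Matrix (Idx n) (Idx n) K} (hM : IsUnit M.det) :
    ext n A M⁻¹ * ext n A M = 1 := by
  rw [ext, ext, ← (algebraMap K A).mapMatrix_apply, ← (algebraMap K A).mapMatrix_apply, ← map_mul,
    nonsing_inv_mul _ hM, map_one]

lemma m1_eq_blockDiagonal (M : Matrix (Fin n) (Fin n) A) :
    m1 n A M = blockDiagonal fun _ => M := rfl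

lemma m1_one_add_mul (M N : Matrix (Fin n) (Fin n) A) :
    m1 n A (1 + M * N) = 1 + m1 n A M * m1 n A N := by
  simp only [m1_eq_blockDiagonal]
  rw [← blockDiagonal_mul, ← blockDiagonal_one, ← blockDiagonal_add]
  rfl

lemma mapMatrix_m1 [Algebra K A] [Algebra K B] (f : A →ₐ[K] B) (M : Matrix (Fin n) (Fin n) A) :
    f.mapMatrix (m1 n A M) = m1 n B (f.mapMatrix M) := by
  ext p r
  simp only [m1, AlgHom.mapMatrix_apply, map_apply]
  split_ifs <;> simp

lemma mapMatrix_m2 [Algebra K A] [Algebra K B] (f : A →ₐ[K] B) (M : Matrix (Fin n) (Fin n) A) :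
    f.mapMatrix (m2 n A M) = m2 n B (f.mapMatrix M) := by
  ext p r
  simp only [m2, AlgHom.mapMatrix_apply, map_apply]
  split_ifs <;> simp

lemma mapMatrix_ext [Algebra K A] [Algebra K B] (f : A →ₐ[K] B) (M : Matrix (Idx n) (Idx n) K) :
    f.mapMatrix (ext n A M) = ext n B M := by
  ext p r
  exact f.commutes _

end Rmatrix

namespace Dell

open Rmatrix Matrix

variable (ℓ n : ℕ)

lemma Ria_mul_Ra : Ria ℓ n * Ra ℓ n = 1 := ext_inv_mul_ext n (isUnit_det_Rm n)

lemma R21ia_mul_R21a : R21ia ℓ n * R21a ℓ n = 1 := ext_inv_mul_ext n (isUnit_det_Rm21 n)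

lemma q1_RYa (a : ZMod ℓ) : q1 ℓ n (RYa ℓ n a) = 1 + q1 ℓ n (DM ℓ n a) * q1 ℓ n (XM ℓ n a) :=
  m1_one_add_mul n _ _

abbrev πM : Matrix (Idx n) (Idx n) (F ℓ n) →ₐ[K] Matrix (Idx n) (Idx n) (Dl ℓ n) :=
  (RingQuot.mkAlgHom K (Rel ℓ n)).mapMatrix

variable {ℓ n} in
lemma πM_eq_of_rel {M N : Matrix (Idx n) (Idx n) (F ℓ n)} (h : ∀ p r, Rel ℓ n (M p r) (N p r)) :
    πM ℓ n M = πM ℓ n N :=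
  Matrix.ext fun p r => RingQuot.mkAlgHom_rel K (h p r)

lemma πM_o1_XF (a : ZMod ℓ) : πM ℓ n (o1 ℓ n (XF ℓ n a)) = q1 ℓ n (XM ℓ n a) :=
  mapMatrix_m1 n _ _
lemma πM_o2_XF (a : ZMod ℓ) : πM ℓ n (o2 ℓ n (XF ℓ n a)) = q2 ℓ n (XM ℓ n a) :=
  mapMatrix_m2 n _ _
lemma πM_o1_DF (a : ZMod ℓ) : πM ℓ n (o1 ℓ n (DF ℓ n a)) = q1 ℓ n (DM ℓ n a) :=
  mapMatrix_m1 n _ _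
lemma πM_o2_DF (a : ZMod ℓ) : πM ℓ n (o2 ℓ n (DF ℓ n a)) = q2 ℓ n (DM ℓ n a) :=
  mapMatrix_m2 n _ _
lemma πM_Rf : πM ℓ n (Rf ℓ n) = Ra ℓ n := mapMatrix_ext n _ _
lemma πM_Rif : πM ℓ n (Rif ℓ n) = Ria ℓ n := mapMatrix_ext n _ _
lemma πM_R21f : πM ℓ n (R21f ℓ n) = R21a ℓ n := mapMatrix_ext n _ _
lemma πM_R21if : πM ℓ n (R21if ℓ n) = R21ia ℓ n := mapMatrix_ext n _ _

lemma q1_XM_mul_q2_XM_sub_one (a : ZMod ℓ) :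
    q1 ℓ n (XM ℓ n a) * q2 ℓ n (XM ℓ n (a - 1))
      = q2 ℓ n (XM ℓ n (a - 1)) * R21a ℓ n * q1 ℓ n (XM ℓ n a) := by
  simpa only [map_mul, πM_o1_XF, πM_o2_XF, πM_R21f] using πM_eq_of_rel (Rel.xxadj a)

lemma q1_DM_mul_q2_DM_add_one (a : ZMod ℓ) :
    q1 ℓ n (DM ℓ n a) * q2 ℓ n (DM ℓ n (a + 1))
      = q2 ℓ n (DM ℓ n (a + 1)) * Ria ℓ n * q1 ℓ n (DM ℓ n a) := by
  simpa only [map_mul, πM_o1_DF, πM_o2_DF, πM_Rif] using πM_eq_of_rel (Rel.ddadj a)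

lemma q1_DM_mul_q2_XM_add_one (a : ZMod ℓ) :
    q1 ℓ n (DM ℓ n a) * q2 ℓ n (XM ℓ n (a + 1))
      = Ra ℓ n * q2 ℓ n (XM ℓ n (a + 1)) * q1 ℓ n (DM ℓ n a) := by
  simpa only [map_mul, πM_o1_DF, πM_o2_XF, πM_Rf] using πM_eq_of_rel (Rel.dxadj1 a)

lemma q1_DM_mul_q2_XM_sub_one (a : ZMod ℓ) :
    q1 ℓ n (DM ℓ n a) * q2 ℓ n (XM ℓ n (a - 1))
      = q2 ℓ n (XM ℓ n (a - 1)) * q1 ℓ n (DM ℓ n a) * R21ia ℓ n := by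
  simpa only [map_mul, πM_o1_DF, πM_o2_XF, πM_R21if] using πM_eq_of_rel (Rel.dxadj2 a)

abbrev flipM : Matrix (Idx n) (Idx n) (Dl ℓ n) ≃ₐ[K] Matrix (Idx n) (Idx n) (Dl ℓ n) :=
  reindexAlgEquiv K (Dl ℓ n) (Equiv.prodComm (Fin n) (Fin n))

lemma flipM_q1 (M : Matrix (Fin n) (Fin n) (Dl ℓ n)) : flipM ℓ n (q1 ℓ n M) = q2 ℓ n M := rfl
lemma flipM_q2 (M : Matrix (Fin n) (Fin n) (Dl ℓ n)) : flipM ℓ n (q2 ℓ n M) = q1 ℓ n M := rfl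
lemma flipM_Ra : flipM ℓ n (Ra ℓ n) = R21a ℓ n := rfl
lemma flipM_R21a : flipM ℓ n (R21a ℓ n) = Ra ℓ n := rfl

lemma flipM_Ria : flipM ℓ n (Ria ℓ n) = R21ia ℓ n := by
  rw [R21ia, Rm21_eq_submatrix, inv_submatrix_equiv]
  rfl

lemma flipM_R21ia : flipM ℓ n (R21ia ℓ n) = Ria ℓ n := by
  rw [R21ia, Rm21_eq_submatrix, inv_submatrix_equiv]
  rfl

lemma q2_XM_add_one_mul_q1_XM (a : ZMod ℓ) :
    q2 ℓ n (XM ℓ n (a + 1)) * q1 ℓ n (XM ℓ n a)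
      = q1 ℓ n (XM ℓ n a) * Ra ℓ n * q2 ℓ n (XM ℓ n (a + 1)) := by
  simpa only [map_mul, flipM_q1, flipM_q2, flipM_R21a, add_sub_cancel_right]
    using congrArg (flipM ℓ n) (q1_XM_mul_q2_XM_sub_one ℓ n (a + 1))

lemma q2_DM_add_one_mul_q1_XM (a : ZMod ℓ) :
    q2 ℓ n (DM ℓ n (a + 1)) * q1 ℓ n (XM ℓ n a)
      = q1 ℓ n (XM ℓ n a) * q2 ℓ n (DM ℓ n (a + 1)) * Ria ℓ n := by
  simpa only [map_mul, flipM_q1, flipM_q2, flipM_R21ia, add_sub_cancel_right]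
    using congrArg (flipM ℓ n) (q1_DM_mul_q2_XM_sub_one ℓ n (a + 1))

lemma q2_DM_sub_one_mul_q1_DM (a : ZMod ℓ) :
    q2 ℓ n (DM ℓ n (a - 1)) * q1 ℓ n (DM ℓ n a)
      = q1 ℓ n (DM ℓ n a) * R21ia ℓ n * q2 ℓ n (DM ℓ n (a - 1)) := by
  simpa only [map_mul, flipM_q1, flipM_q2, flipM_Ria, sub_add_cancel]
    using congrArg (flipM ℓ n) (q1_DM_mul_q2_DM_add_one ℓ n (a - 1))

lemma q2_DM_sub_one_mul_q1_XM (a : ZMod ℓ) :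
    q2 ℓ n (DM ℓ n (a - 1)) * q1 ℓ n (XM ℓ n a)
      = R21a ℓ n * q1 ℓ n (XM ℓ n a) * q2 ℓ n (DM ℓ n (a - 1)) := by
  simpa only [map_mul, flipM_q1, flipM_q2, flipM_Ra, sub_add_cancel]
    using congrArg (flipM ℓ n) (q1_DM_mul_q2_XM_add_one ℓ n (a - 1))

section DistantVertices

variable {ℓ n} {a b : ZMod ℓ}

lemma commute_q1_XM_q2_XM (h : b ≠ a ∧ b ≠ a + 1 ∧ b ≠ a - 1) :
    Commute (q1 ℓ n (XM ℓ n a)) (q2 ℓ n (XM ℓ n b)) := by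
  simpa only [commute_iff_eq, map_mul, πM_o1_XF, πM_o2_XF] using πM_eq_of_rel (Rel.xxcom a b h)

lemma commute_q1_DM_q2_DM (h : b ≠ a ∧ b ≠ a + 1 ∧ b ≠ a - 1) :
    Commute (q1 ℓ n (DM ℓ n a)) (q2 ℓ n (DM ℓ n b)) := by
  simpa only [commute_iff_eq, map_mul, πM_o1_DF, πM_o2_DF] using πM_eq_of_rel (Rel.ddcom a b h)

lemma commute_q1_DM_q2_XM (h : b ≠ a ∧ b ≠ a + 1 ∧ b ≠ a - 1) :
    Commute (q1 ℓ n (DM ℓ n a)) (q2 ℓ n (XM ℓ n b)) := by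
  simpa only [commute_iff_eq, map_mul, πM_o1_DF, πM_o2_XF] using πM_eq_of_rel (Rel.dxcom a b h)

lemma commute_q1_XM_q2_DM (h : b ≠ a ∧ b ≠ a + 1 ∧ b ≠ a - 1) :
    Commute (q1 ℓ n (XM ℓ n a)) (q2 ℓ n (DM ℓ n b)) := by
  have h' : a ≠ b ∧ a ≠ b + 1 ∧ a ≠ b - 1 := by
    refine ⟨h.1.symm, fun e => h.2.2 ?_, fun e => h.2.1 ?_⟩ <;> rw [e] <;> ring
  simpa only [flipM_q1, flipM_q2] using
    ((commute_q1_DM_q2_XM (n := n) h').map (flipM ℓ n)).symm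

end DistantVertices

end Dell

namespace Statement10

open Rmatrix Dell

theorem statement_10_general (ℓ n : ℕ) (a : ZMod ℓ) :
    (Ria ℓ n * q1 ℓ n (RYa ℓ n a) * Ra ℓ n * q2 ℓ n (XM ℓ n (a + 1))
      = q2 ℓ n (XM ℓ n (a + 1)) * q1 ℓ n (RYa ℓ n a)) ∧
    (∀ b : ZMod ℓ, b ≠ a → b ≠ a + 1 →
      q1 ℓ n (RYa ℓ n a) * q2 ℓ n (XM ℓ n b) = q2 ℓ n (XM ℓ n b) * q1 ℓ n (RYa ℓ n a)) ∧
    (q1 ℓ n (RYa ℓ n a) * q2 ℓ n (DM ℓ n (a + 1))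
      = q2 ℓ n (DM ℓ n (a + 1)) * Ria ℓ n * q1 ℓ n (RYa ℓ n a) * Ra ℓ n) ∧
    (∀ b : ZMod ℓ, b ≠ a → b ≠ a + 1 →
      q1 ℓ n (RYa ℓ n a) * q2 ℓ n (DM ℓ n b) = q2 ℓ n (DM ℓ n b) * q1 ℓ n (RYa ℓ n a)) := by
  simp only [q1_RYa]
  refine ⟨conj_one_add_mul_mul_eq_mul (Ria_mul_Ra ℓ n) (q2_XM_add_one_mul_q1_XM ℓ n a)
      (q1_DM_mul_q2_XM_add_one ℓ n a), fun b hb hb' => ?_,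
    one_add_mul_mul_eq_mul_conj (Ria_mul_Ra ℓ n) (q2_DM_add_one_mul_q1_XM ℓ n a)
      (q1_DM_mul_q2_DM_add_one ℓ n a), fun b hb hb' => ?_⟩
  all_goals rcases eq_or_ne b (a - 1) with rfl | hb''
  · exact commute_one_add_mul_of_right_twist (q1_XM_mul_q2_XM_sub_one ℓ n a)
      (q1_DM_mul_q2_XM_sub_one ℓ n a) (R21ia_mul_R21a ℓ n)
  · exact (commute_q1_DM_q2_XM ⟨hb, hb', hb''⟩).one_add_mul (commute_q1_XM_q2_XM ⟨hb, hb', hb''⟩)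
  · exact commute_one_add_mul_of_left_twist (q2_DM_sub_one_mul_q1_XM ℓ n a)
      (q2_DM_sub_one_mul_q1_DM ℓ n a) (R21ia_mul_R21a ℓ n)
  · exact (commute_q1_DM_q2_DM ⟨hb, hb', hb''⟩).one_add_mul (commute_q1_XM_q2_DM ⟨hb, hb', hb''⟩)

/--
For `ℓ ≥ 3`, `a ∈ ℤ/ℓℤ` and `^RY^{(a)} = I + D^{(a)}X^{(a)}` in `D_ℓ`:
(i) `R⁻¹ (^RY^{(a)})₁ R X^{(a+1)}₂ = X^{(a+1)}₂ (^RY^{(a)})₁`;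
(ii) `(^RY^{(a)})₁ X^{(b)}₂ = X^{(b)}₂ (^RY^{(a)})₁` for all `b ≠ a, a+1`;
(iii) `(^RY^{(a)})₁ D^{(a+1)}₂ = D^{(a+1)}₂ R⁻¹ (^RY^{(a)})₁ R`;
(iv) `(^RY^{(a)})₁ D^{(b)}₂ = D^{(b)}₂ (^RY^{(a)})₁` for all `b ≠ a, a+1`.
-/
theorem statement_10 (ℓ n : ℕ) (hl : 3 ≤ ℓ) (hn : 1 ≤ n) (a : ZMod ℓ) :
    (Ria ℓ n * q1 ℓ n (RYa ℓ n a) * Ra ℓ n * q2 ℓ n (XM ℓ n (a + 1))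
      = q2 ℓ n (XM ℓ n (a + 1)) * q1 ℓ n (RYa ℓ n a)) ∧
    (∀ b : ZMod ℓ, b ≠ a → b ≠ a + 1 →
      q1 ℓ n (RYa ℓ n a) * q2 ℓ n (XM ℓ n b) = q2 ℓ n (XM ℓ n b) * q1 ℓ n (RYa ℓ n a)) ∧
    (q1 ℓ n (RYa ℓ n a) * q2 ℓ n (DM ℓ n (a + 1))
      = q2 ℓ n (DM ℓ n (a + 1)) * Ria ℓ n * q1 ℓ n (RYa ℓ n a) * Ra ℓ n) ∧
    (∀ b : ZMod ℓ, b ≠ a → b ≠ a + 1 →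
      q1 ℓ n (RYa ℓ n a) * q2 ℓ n (DM ℓ n b) = q2 ℓ n (DM ℓ n b) * q1 ℓ n (RYa ℓ n a)) :=
  statement_10_general ℓ n a

end Statement10
end
end
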